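/- arXiv:2306.06444 — 2 statements merged into one kernel-verified Lean document; each statement's English description precedes it below -/
import Mathlib

section
/- Let {P_n}_{n≥0} be a monic PS satisfying the three-term recurrence with coefficients (β_n), (γ_{n+1}), let Q_n := (n+1)^{-1} D_ω P_{n+1}, and suppose {Q_n}_{n≥0} satisfies the three-term recurrence with coefficients (β̃_n), (γ̃_{n+1}). Then for all n ≥ 0: P_{n+2} = Q_{n+2} + ã¹_{n+1} Q_{n+1} + ã⁰_n Q_n and P_1 = Q_1 + ã¹_0, where ã¹_n = (n+1)(β_{n+1} − β̃_n − ω) and ã⁰_n = (n+1)γ_{n+2} − (n+2)γ̃_{n+1} for all n ≥ 0. -/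
open Polynomial

/-- The Hahn difference operator `D_ω` acting on polynomials:
`(D_ω f)(x) = (f(x+ω) − f(x))/ω`. -/
noncomputable def Dw (ω : ℂ) (f : Polynomial ℂ) : Polynomial ℂ :=
  C ω⁻¹ * (f.comp (X + C ω) - f)

/-- A monic polynomial sequence: each `P n` is monic of degree `n`. -/
def MonicPS (P : ℕ → Polynomial ℂ) : Prop :=
  ∀ n, (P n).Monic ∧ (P n).natDegree = n

/-- Three-term recurrence with coefficients `β`, `γ` (where `γ (n+1)` is used). -/
def TTR (P : ℕ → Polynomial ℂ) (β γ : ℕ → ℂ) : Prop :=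
  P 0 = 1 ∧ P 1 = X - C (β 0) ∧
    ∀ n : ℕ, P (n + 2) = (X - C (β (n + 1))) * P (n + 1) - C (γ (n + 1)) * P n

/-- Orthogonality of a polynomial sequence with respect to a linear functional. -/
def IsOPSwrt (P : ℕ → Polynomial ℂ) (u : Polynomial ℂ →ₗ[ℂ] ℂ) : Prop :=
  (∀ n m, n ≠ m → u (P n * P m) = 0) ∧ ∀ n, u (P n * P n) ≠ 0

lemma Dw_sub (ω : ℂ) (f g : Polynomial ℂ) : Dw ω (f - g) = Dw ω f - Dw ω g := by
  unfold Dw; simp only [sub_comp]; ring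

lemma Dw_Cmul (ω c : ℂ) (f : Polynomial ℂ) : Dw ω (C c * f) = C c * Dw ω f := by
  unfold Dw; simp only [mul_comp, C_comp]; ring

lemma Dw_one (ω : ℂ) : Dw ω 1 = 0 := by
  unfold Dw; simp

lemma Dw_prod (ω : ℂ) (hω : ω ≠ 0) (b : ℂ) (f : Polynomial ℂ) :
    Dw ω ((X - C b) * f) = (X + C ω - C b) * Dw ω f + f := by
  have h : (C ω⁻¹ : Polynomial ℂ) * C ω = 1 := by
    rw [← C_mul, inv_mul_cancel₀ hω, C_1]
  unfold Dw
  simp only [mul_comp, sub_comp, X_comp, C_comp]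
  linear_combination f * h

theorem second_structure_relation_coefficients
    (ω : ℂ) (hω : ω ≠ 0) (P Q : ℕ → Polynomial ℂ) (hP : MonicPS P)
    (β γ tβ tγ : ℕ → ℂ) (hPr : TTR P β γ)
    (hQ : ∀ n, Q n = ((n : ℂ) + 1)⁻¹ • Dw ω (P (n + 1)))
    (hQr : TTR Q tβ tγ) :
    (∀ n : ℕ, P (n + 2) = Q (n + 2)
        + C (((n : ℂ) + 2) * (β (n + 2) - tβ (n + 1) - ω)) * Q (n + 1)
        + C (((n : ℂ) + 1) * γ (n + 2) - ((n : ℂ) + 2) * tγ (n + 1)) * Q n) ∧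
      P 1 = Q 1 + C (β 1 - tβ 0 - ω) := by
  have hD : ∀ n : ℕ, Dw ω (P (n + 1)) = C ((n : ℂ) + 1) * Q n := by
    intro n
    have hne : ((n : ℂ) + 1) ≠ 0 := Nat.cast_add_one_ne_zero n
    rw [hQ n, smul_eq_C_mul, ← mul_assoc, ← C_mul, mul_inv_cancel₀ hne, C_1, one_mul]
  constructor
  · intro n
    have h1 := congrArg (Dw ω) (hPr.2.2 (n + 1))
    rw [Dw_sub, Dw_prod ω hω, Dw_Cmul, hD (n + 2), hD (n + 1), hD n] at h1
    push_cast at h1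
    have h2 := hQr.2.2 n
    simp only [C_mul, C_sub, C_add, C_1, C_0, map_ofNat] at h1 h2 ⊢
    linear_combination -h1 + ((C (n : ℂ) : Polynomial ℂ) + 2) * h2
  · have h1 := congrArg (Dw ω) (hPr.2.2 0)
    rw [Dw_sub, Dw_prod ω hω, Dw_Cmul, hD 1, hD 0, hPr.1, Dw_one] at h1
    push_cast at h1
    rw [hQr.1] at h1
    have h2 := hQr.2.1
    simp only [C_mul, C_sub, C_add, C_1, C_0, map_ofNat] at h1 h2 ⊢
    linear_combination -h1 + h2
end

section
/- Let {P_n}_{n≥0} be a monic PS that is an OPS with respect to some linear functional u_0, and suppose that the monic PS {P^{[1]}_n}_{n≥0}, where P^{[1]}_n := (n+1)^{-1} D_ω P_{n+1}, is also an OPS. For k ≥ 1 define P^{[k]}_n := (n+1)^{-1} D_ω P^{[k−1]}_{n+1} (so that P^{[k]}_n = (1/(n+1)_k) D_ω^k P_{n+k}). Then for every k ≥ 1 the sequence {P^{[k]}_n}_{n≥0} is an OPS, and moreover its normalized D_ω-derivative sequence {P^{[k+1]}_n}_{n≥0} is also an OPS; that is, each {P^{[k]}_n}_{n≥0} is a D_ω-classical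 OPS. -/
open Polynomial

/-!
If `{P_n}` is orthogonal for `u` and `{P^{[1]}_n}` for `v`, the three-term recurrence of `{P_n}`,
differentiated, shows that `v` kills `P_n` for `n ≥ 3` and `v ∘ D_ω` kills `P_n` for `n ≥ 2`.
Hence `v = φ u` and `v ∘ D_ω = ψ u` with `deg φ ≤ 2` and `deg ψ ≤ 1`: `u` satisfies the Pearson
equation `u (φ D_ω f) = u (ψ f)`.

Conversely, for such a pair, `X^m = (x - ω)^m ∘ (x + ω)` and the Leibniz rule for `D_ω` give
`(n + 1) u (φ X^m P^{[1]}_n) = δ_{mn} (ψ₁ - m φ₂) u (P_{n+1}²)` for `m ≤ n`, so `{P^{[1]}_n}` is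
orthogonal for `φ u` exactly when `ψ₁ - n φ₂ ≠ 0` for all `n`. The functional `φ u` satisfies the
Pearson equation with `(φ(x + ω), ψ - D_ω φ)`, whose constants `ψ₁ - n φ₂` are those of `(φ, ψ)`
shifted by two, so the property passes from `P^{[k]}` to `P^{[k+1]}`.
-/

open Finset

section Dw

variable {ω : ℂ}

lemma Dw_add (f g : ℂ[X]) : Dw ω (f + g) = Dw ω f + Dw ω g := by
  unfold Dw; rw [add_comp]; ring

lemma Dw_smul (c : ℂ) (f : ℂ[X]) : Dw ω (c • f) = c • Dw ω f := by
  unfold Dw; rw [smul_eq_C_mul, smul_eq_C_mul, mul_comp, C_comp]; ring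

variable (ω) in
noncomputable def DwLinearMap : ℂ[X] →ₗ[ℂ] ℂ[X] where
  toFun := Dw ω
  map_add' := Dw_add
  map_smul' := Dw_smul

lemma Dw_C (c : ℂ) : Dw ω (C c) = 0 := by simp [Dw]

lemma Dw_X (hω : ω ≠ 0) : Dw ω X = 1 := by
  simp [Dw, ← C_mul, hω]

lemma Dw_mul (f g : ℂ[X]) : Dw ω (f * g) = f.comp (X + C ω) * Dw ω g + Dw ω f * g := by
  unfold Dw; rw [mul_comp]; ring

lemma coeff_Dw (hω : ω ≠ 0) {f : ℂ[X]} {d : ℕ} (hf : f.natDegree ≤ d + 1) :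
    (Dw ω f).coeff d = (d + 1) * f.coeff (d + 1) := by
  have hasse : hasseDeriv d f = C (f.coeff d) + C ((d + 1) * f.coeff (d + 1)) * X := by
    ext (_ | _ | m) <;> simp [hasseDeriv_coeff, coeff_C, coeff_X, coeff_one]
    · rw [add_comm 1 d, Nat.choose_succ_self_right]; push_cast; ring
    · exact .inr (coeff_eq_zero_of_natDegree_lt (by omega))
  rw [Dw, coeff_C_mul, coeff_sub, ← taylor_apply, taylor_coeff, hasse, eval_add, eval_C, eval_mul,
    eval_C, eval_X, add_sub_cancel_left]
  field_simp

lemma natDegree_Dw_le {f : ℂ[X]} {d : ℕ} (hf : f.natDegree ≤ d + 1) :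
    (Dw ω f).natDegree ≤ d := by
  rcases eq_or_ne ω 0 with rfl | hω
  · simp [Dw]
  refine natDegree_le_iff_coeff_eq_zero.2 fun k hk => ?_
  rw [coeff_Dw hω (hf.trans (by omega)), coeff_eq_zero_of_natDegree_lt (by omega), mul_zero]

lemma coeff_comp_X_add_C_of_natDegree_le {f : ℂ[X]} {d : ℕ} (hf : f.natDegree ≤ d) :
    (f.comp (X + C ω)).coeff d = f.coeff d := by
  rw [← taylor_apply]
  rcases hf.lt_or_eq with hlt | rfl
  · rw [coeff_eq_zero_of_natDegree_lt hlt, coeff_eq_zero_of_natDegree_lt (by rwa [natDegree_taylor])]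
  · simpa only [leadingCoeff, natDegree_taylor] using leadingCoeff_taylor (r := ω) (f := f)

lemma X_sub_C_pow_comp (m : ℕ) : ((X - C ω : ℂ[X]) ^ m).comp (X + C ω) = X ^ m := by
  simp

end Dw

lemma monicPS_X_sub_C_pow (ω : ℂ) : MonicPS fun m => (X - C ω) ^ m :=
  fun m => ⟨(monic_X_sub_C ω).pow m, by simp⟩

section MonicPS

variable {P : ℕ → ℂ[X]}

lemma MonicPS.isMonicOfDegree (hP : MonicPS P) (n : ℕ) : IsMonicOfDegree (P n) n :=
  ⟨(hP n).2, (hP n).1⟩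

lemma MonicPS.coeff_self (hP : MonicPS P) (n : ℕ) : (P n).coeff n = 1 := by
  simpa [(hP n).2] using (hP n).1.coeff_natDegree

lemma MonicPS.zero_eq_one (hP : MonicPS P) : P 0 = 1 :=
  eq_one_of_monic_natDegree_zero (hP 0).1 (hP 0).2

def MonicPS.toSequence (hP : MonicPS P) : Sequence ℂ where
  elems' := P
  degree_eq' n := by rw [degree_eq_natDegree (hP n).1.ne_zero, (hP n).2]

lemma MonicPS.isUnit_leadingCoeff (hP : MonicPS P) (n : ℕ) :
    IsUnit (hP.toSequence n).leadingCoeff := by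
  rw [show hP.toSequence n = P n from rfl, (hP n).1.leadingCoeff]
  exact isUnit_one

lemma MonicPS.exists_sum_eq (hP : MonicPS P) {f : ℂ[X]} {N : ℕ} (hf : f.natDegree ≤ N) :
    ∃ c : ℕ → ℂ, ∑ j ∈ range (N + 1), c j • P j = f := by
  refine (Submodule.mem_span_image_finset_iff_exists_fun' ℂ).1 ?_
  rw [coe_range]
  refine (hP.toSequence.span_degreeLT fun i _ => hP.isUnit_leadingCoeff i).ge ?_
  exact mem_degreeLT.2 ((degree_le_of_natDegree_le hf).trans_lt (by exact_mod_cast N.lt_succ_self))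

lemma MonicPS.linearMap_ext (hP : MonicPS P) {v w : ℂ[X] →ₗ[ℂ] ℂ}
    (h : ∀ n, v (P n) = w (P n)) : v = w :=
  LinearMap.ext_on_range (hP.toSequence.span hP.isUnit_leadingCoeff) h

end MonicPS

noncomputable def derivSeq (ω : ℂ) (P : ℕ → ℂ[X]) (n : ℕ) : ℂ[X] :=
  ((n : ℂ) + 1)⁻¹ • Dw ω (P (n + 1))

lemma Dw_eq_smul_derivSeq (ω : ℂ) (P : ℕ → ℂ[X]) (n : ℕ) :
    Dw ω (P (n + 1)) = ((n : ℂ) + 1) • derivSeq ω P n := by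
  rw [derivSeq, smul_smul, mul_inv_cancel₀ (Nat.cast_add_one_ne_zero n), one_smul]

lemma monicPS_derivSeq {ω : ℂ} (hω : ω ≠ 0) {P : ℕ → ℂ[X]} (hP : MonicPS P) :
    MonicPS (derivSeq ω P) := by
  intro n
  have hdeg := natDegree_Dw_le (ω := ω) (hP (n + 1)).2.le
  have h := (isMonicOfDegree_iff (derivSeq ω P n) n).2
    ⟨(natDegree_smul_le _ _).trans hdeg, by
      rw [derivSeq, coeff_smul, coeff_Dw hω (hP (n + 1)).2.le, hP.coeff_self, smul_eq_mul,
        mul_one, inv_mul_cancel₀ (Nat.cast_add_one_ne_zero n)]⟩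
  exact ⟨h.monic, h.natDegree_eq⟩

namespace IsOPSwrt

variable {P : ℕ → ℂ[X]} {u : ℂ[X] →ₗ[ℂ] ℂ}

lemma sum_smul_eq_of_natDegree_le (hu : IsOPSwrt P u) (hP : MonicPS P) {f : ℂ[X]} {N : ℕ}
    (hf : f.natDegree ≤ N) :
    ∑ j ∈ range (N + 1), (u (P j * f) / u (P j * P j)) • P j = f := by
  obtain ⟨c, rfl⟩ := hP.exists_sum_eq hf
  refine sum_congr rfl fun j hj => ?_
  rw [mul_sum, map_sum, sum_eq_single j, mul_smul_comm, map_smul, smul_eq_mul,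
    mul_div_cancel_right₀ _ (hu.2 j)]
  · intro i _ hij
    rw [mul_smul_comm, map_smul, hu.1 j i (Ne.symm hij), smul_zero]
  · exact fun h => absurd hj h

lemma apply_mul_eq_coeff_mul (hu : IsOPSwrt P u) (hP : MonicPS P) {f : ℂ[X]} {n : ℕ}
    (hf : f.natDegree ≤ n) : u (P n * f) = f.coeff n * u (P n * P n) := by
  have hcoeff := congrArg (coeff · n) (hu.sum_smul_eq_of_natDegree_le hP hf)
  simp only [finsetSum_coeff, coeff_smul, smul_eq_mul] at hcoeff
  rw [sum_eq_single n, hP.coeff_self, mul_one] at hcoeff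
  · rw [← hcoeff, div_mul_cancel₀ _ (hu.2 n)]
  · intro j hj hjn
    rw [coeff_eq_zero_of_natDegree_lt ((hP j).2.trans_lt (by simp at hj; omega)), mul_zero]
  · simp

lemma apply_mul_eq_zero_of_natDegree_lt (hu : IsOPSwrt P u) (hP : MonicPS P) {f : ℂ[X]}
    {n : ℕ} (hf : f.natDegree < n) : u (P n * f) = 0 := by
  rw [hu.apply_mul_eq_coeff_mul hP hf.le, coeff_eq_zero_of_natDegree_lt hf, zero_mul]

lemma exists_X_mul_eq (hu : IsOPSwrt P u) (hP : MonicPS P) (n : ℕ) :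
    ∃ b c : ℂ, X * P (n + 1) = P (n + 2) + C b * P (n + 1) + C c * P n := by
  set f := X * P (n + 1) - P (n + 2) with hf_def
  have hX : IsMonicOfDegree (X * P (n + 1)) (n + 2) := by
    convert (isMonicOfDegree_X ℂ).mul (hP.isMonicOfDegree (n + 1)) using 1; ring
  have hf : f.natDegree ≤ n + 1 :=
    Nat.lt_succ_iff.1 (hX.natDegree_sub_lt (by omega) (hP.isMonicOfDegree (n + 2)))
  have hlow : ∀ j < n, u (P j * f) = 0 := fun j hj => by
    rw [mul_sub, map_sub, hu.1 j (n + 2) (by omega), sub_zero,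
      show P j * (X * P (n + 1)) = P (n + 1) * (X * P j) by ring,
      hu.apply_mul_eq_zero_of_natDegree_lt hP
        (natDegree_mul_le.trans_lt (by simp [(hP j).2]; omega))]
  have hsum := hu.sum_smul_eq_of_natDegree_le hP hf
  rw [sum_range_succ, sum_range_succ, sum_eq_zero fun j hj => by
    rw [hlow j (mem_range.1 hj), zero_div, zero_smul], zero_add, smul_eq_C_mul,
    smul_eq_C_mul] at hsum
  exact ⟨u (P (n + 1) * f) / u (P (n + 1) * P (n + 1)), u (P n * f) / u (P n * P n),
    by linear_combination -hf_def - hsum⟩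

lemma exists_eq_comp_mulLeft (hu : IsOPSwrt P u) (hP : MonicPS P) {d : ℕ} (v : ℂ[X] →ₗ[ℂ] ℂ)
    (hv : ∀ m, d < m → v (P m) = 0) :
    ∃ φ : ℂ[X], φ.natDegree ≤ d ∧ v = u.comp (LinearMap.mulLeft ℂ φ) := by
  refine ⟨∑ j ∈ range (d + 1), (v (P j) / u (P j * P j)) • P j,
    natDegree_sum_le_of_forall_le _ _ fun j hj =>
      (natDegree_smul_le _ _).trans ((hP j).2.trans_le (by simpa [Nat.lt_succ_iff] using hj)),
    hP.linearMap_ext fun n => ?_⟩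
  simp only [LinearMap.comp_apply, LinearMap.mulLeft_apply, sum_mul, map_sum, smul_mul_assoc,
    map_smul, smul_eq_mul]
  rw [sum_eq_single n (fun j _ hj => by rw [hu.1 j n hj, mul_zero])
    (fun hn => by rw [hv n (by simpa using hn), zero_div, zero_mul]),
    div_mul_cancel₀ _ (hu.2 n)]

end IsOPSwrt

lemma apply_mul_eq_coeff_mul_of_apply_X_pow_mul {v : ℂ[X] →ₗ[ℂ] ℂ} {f g : ℂ[X]} {n : ℕ}
    (hv : ∀ m < n, v (X ^ m * g) = 0) (hf : f.natDegree ≤ n) :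
    v (f * g) = f.coeff n * v (X ^ n * g) := by
  conv_lhs => rw [f.as_sum_range_C_mul_X_pow' (Nat.lt_succ_of_le hf)]
  simp only [sum_mul, map_sum, C_mul', smul_mul_assoc, map_smul, smul_eq_mul]
  refine sum_eq_single n (fun j hj hjn => ?_) (by simp)
  rw [hv j (by have := mem_range.1 hj; omega), mul_zero]

lemma isOPSwrt_of_apply_X_pow_mul {Q : ℕ → ℂ[X]} (hQ : MonicPS Q) {v : ℂ[X] →ₗ[ℂ] ℂ}
    (hv : ∀ m n, m < n → v (X ^ m * Q n) = 0) (hv' : ∀ n, v (X ^ n * Q n) ≠ 0) :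
    IsOPSwrt Q v := by
  have key : ∀ {f : ℂ[X]} {n : ℕ}, f.natDegree ≤ n → v (f * Q n) = f.coeff n * v (X ^ n * Q n) :=
    fun hf => apply_mul_eq_coeff_mul_of_apply_X_pow_mul (hv · _) hf
  refine ⟨fun n m hnm => ?_, fun n => ?_⟩
  · rcases hnm.lt_or_gt with h | h
    · rw [key ((hQ n).2.le.trans h.le), coeff_eq_zero_of_natDegree_lt ((hQ n).2.trans_lt h),
        zero_mul]
    · rw [mul_comm, key ((hQ m).2.le.trans h.le),
        coeff_eq_zero_of_natDegree_lt ((hQ m).2.trans_lt h), zero_mul]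
  · rw [key (hQ n).2.le, hQ.coeff_self, one_mul]
    exact hv' n

section Pearson

variable {ω : ℂ} {φ ψ : ℂ[X]}

lemma natDegree_mul_sub_mul_Dw_le (hφ : φ.natDegree ≤ 2) (hψ : ψ.natDegree ≤ 1) {g : ℂ[X]}
    {m : ℕ} (hg : g.natDegree ≤ m) : (ψ * g - φ * Dw ω g).natDegree ≤ m + 1 := by
  cases m with
  | zero =>
    rw [eq_C_of_natDegree_le_zero hg, Dw_C, mul_zero, sub_zero]
    exact (natDegree_mul_le_of_le hψ (natDegree_C _).le).trans le_rfl
  | succ k =>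
    refine (natDegree_sub_le_of_le (natDegree_mul_le_of_le hψ hg)
      (natDegree_mul_le_of_le hφ (natDegree_Dw_le hg))).trans ?_
    omega

lemma coeff_mul_sub_mul_Dw (hω : ω ≠ 0) (hφ : φ.natDegree ≤ 2) (hψ : ψ.natDegree ≤ 1)
    {g : ℂ[X]} {m : ℕ} (hg : g.natDegree ≤ m) :
    (ψ * g - φ * Dw ω g).coeff (m + 1) = (ψ.coeff 1 - m * φ.coeff 2) * g.coeff m := by
  rw [coeff_sub, add_comm m 1, coeff_mul_add_eq_of_natDegree_le hψ hg]
  cases m with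
  | zero => rw [eq_C_of_natDegree_le_zero hg, Dw_C]; simp
  | succ k =>
    rw [show 1 + (k + 1) = 2 + k by ring, coeff_mul_add_eq_of_natDegree_le hφ (natDegree_Dw_le hg),
      coeff_Dw hω hg]
    push_cast
    ring

/-- `apply_mul_Dw` is the weak form of the Pearson equation `D_{-ω}(φ u) = -ψ u`, where
`⟨D_{-ω} w, f⟩ = -⟨w, D_ω f⟩`. -/
structure IsPearsonPair (ω : ℂ) (u : ℂ[X] →ₗ[ℂ] ℂ) (φ ψ : ℂ[X]) : Prop where
  natDegree_fst_le : φ.natDegree ≤ 2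
  natDegree_snd_le : ψ.natDegree ≤ 1
  apply_mul_Dw : ∀ f, u (φ * Dw ω f) = u (ψ * f)

def IsAdmissiblePair (φ ψ : ℂ[X]) : Prop :=
  ∀ n : ℕ, ψ.coeff 1 - n * φ.coeff 2 ≠ 0

lemma IsAdmissiblePair.comp_sub_Dw (hω : ω ≠ 0) (hφ : φ.natDegree ≤ 2)
    (h : IsAdmissiblePair φ ψ) : IsAdmissiblePair (φ.comp (X + C ω)) (ψ - Dw ω φ) := by
  intro n
  rw [coeff_sub, coeff_Dw hω hφ, coeff_comp_X_add_C_of_natDegree_le hφ]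
  convert h (n + 2) using 1
  push_cast
  ring

namespace IsPearsonPair

variable {u : ℂ[X] →ₗ[ℂ] ℂ}

lemma apply_mul_comp_mul_Dw (hpear : IsPearsonPair ω u φ ψ) (g h : ℂ[X]) :
    u (φ * (g.comp (X + C ω) * Dw ω h)) = u ((ψ * g - φ * Dw ω g) * h) := by
  have hleib : g.comp (X + C ω) * Dw ω h = Dw ω (g * h) - Dw ω g * h := by rw [Dw_mul]; ring
  rw [hleib, mul_sub, map_sub, hpear.apply_mul_Dw, ← map_sub]
  congr 1
  ring

theorem comp_mulLeft (hpear : IsPearsonPair ω u φ ψ) :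
    IsPearsonPair ω (u.comp (LinearMap.mulLeft ℂ φ)) (φ.comp (X + C ω)) (ψ - Dw ω φ) where
  natDegree_fst_le := by rw [← taylor_apply, natDegree_taylor]; exact hpear.natDegree_fst_le
  natDegree_snd_le :=
    (natDegree_sub_le_of_le hpear.natDegree_snd_le (natDegree_Dw_le hpear.natDegree_fst_le)).trans
      (by simp)
  apply_mul_Dw f := by
    simp only [LinearMap.comp_apply, LinearMap.mulLeft_apply]
    rw [hpear.apply_mul_comp_mul_Dw φ f]
    congr 1
    ring

variable {P : ℕ → ℂ[X]}

theorem apply_mul_X_pow_mul_derivSeq (hpear : IsPearsonPair ω u φ ψ) (hP : MonicPS P)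
    (hu : IsOPSwrt P u) {m n : ℕ} (hmn : m ≤ n) :
    ((n : ℂ) + 1) * u (φ * (X ^ m * derivSeq ω P n)) =
      (ψ * (X - C ω) ^ m - φ * Dw ω ((X - C ω) ^ m)).coeff (n + 1) *
        u (P (n + 1) * P (n + 1)) := by
  have hdeg := natDegree_mul_sub_mul_Dw_le (ω := ω) hpear.natDegree_fst_le
    hpear.natDegree_snd_le ((monicPS_X_sub_C_pow ω m).2.le)
  calc ((n : ℂ) + 1) * u (φ * (X ^ m * derivSeq ω P n))
      = u (φ * (((X - C ω : ℂ[X]) ^ m).comp (X + C ω) * Dw ω (P (n + 1)))) := by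
        rw [X_sub_C_pow_comp, Dw_eq_smul_derivSeq, mul_smul_comm, mul_smul_comm, map_smul,
          smul_eq_mul]
    _ = u ((ψ * (X - C ω) ^ m - φ * Dw ω ((X - C ω) ^ m)) * P (n + 1)) :=
        hpear.apply_mul_comp_mul_Dw _ _
    _ = _ := by rw [mul_comm, hu.apply_mul_eq_coeff_mul hP (hdeg.trans (by omega))]

theorem isOPSwrt_derivSeq_iff (hpear : IsPearsonPair ω u φ ψ) (hP : MonicPS P)
    (hu : IsOPSwrt P u) (hω : ω ≠ 0) :
    IsOPSwrt (derivSeq ω P) (u.comp (LinearMap.mulLeft ℂ φ)) ↔ IsAdmissiblePair φ ψ := by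
  have hQ := monicPS_derivSeq hω hP
  have hdiag (n : ℕ) : ((n : ℂ) + 1) * u (φ * (X ^ n * derivSeq ω P n)) =
      (ψ.coeff 1 - n * φ.coeff 2) * u (P (n + 1) * P (n + 1)) := by
    rw [hpear.apply_mul_X_pow_mul_derivSeq hP hu le_rfl,
      coeff_mul_sub_mul_Dw hω hpear.natDegree_fst_le hpear.natDegree_snd_le
        (monicPS_X_sub_C_pow ω n).2.le, (monicPS_X_sub_C_pow ω).coeff_self n, mul_one]
  constructor
  · intro hv n hn
    have hXQ := hv.apply_mul_eq_coeff_mul hQ (f := X ^ n) (natDegree_X_pow_le n)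
    simp only [LinearMap.comp_apply, LinearMap.mulLeft_apply, coeff_X_pow_self, one_mul] at hXQ
    have h := hdiag n
    rw [hn, zero_mul, mul_comm (X ^ n), hXQ] at h
    exact hv.2 n ((mul_eq_zero.1 h).resolve_left (Nat.cast_add_one_ne_zero n))
  · intro hadm
    refine isOPSwrt_of_apply_X_pow_mul hQ (fun m n hmn => ?_) (fun n h0 => ?_)
    · have h := hpear.apply_mul_X_pow_mul_derivSeq hP hu hmn.le
      rw [coeff_eq_zero_of_natDegree_lt ((natDegree_mul_sub_mul_Dw_le hpear.natDegree_fst_le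
        hpear.natDegree_snd_le (monicPS_X_sub_C_pow ω m).2.le).trans_lt (by omega)),
        zero_mul] at h
      exact (mul_eq_zero.1 h).resolve_left (Nat.cast_add_one_ne_zero n)
    · have h := hdiag n
      simp only [LinearMap.comp_apply, LinearMap.mulLeft_apply] at h0
      rw [h0, mul_zero] at h
      exact mul_ne_zero (hadm n) (hu.2 (n + 1)) h.symm

end IsPearsonPair

end Pearson

theorem IsOPSwrt.exists_isPearsonPair {ω : ℂ} (hω : ω ≠ 0) {P : ℕ → ℂ[X]}
    {u v : ℂ[X] →ₗ[ℂ] ℂ} (hu : IsOPSwrt P u) (hP : MonicPS P) (hv : IsOPSwrt (derivSeq ω P) v) :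
    ∃ φ ψ, IsPearsonPair ω u φ ψ ∧ v = u.comp (LinearMap.mulLeft ℂ φ) := by
  have hQ := monicPS_derivSeq hω hP
  have hvDP (n : ℕ) : v (Dw ω (P (n + 2))) = 0 := by
    have h := hv.1 0 (n + 1) (by omega)
    rw [hQ.zero_eq_one, one_mul] at h
    rw [Dw_eq_smul_derivSeq, map_smul, h, smul_zero]
  have hvXDP (n : ℕ) : v (X * Dw ω (P (n + 3))) = 0 := by
    rw [Dw_eq_smul_derivSeq, mul_smul_comm, map_smul, mul_comm,
      hv.apply_mul_eq_zero_of_natDegree_lt hQ (by simp), smul_zero]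
  have hvP (m : ℕ) (hm : 2 < m) : v (P m) = 0 := by
    obtain ⟨n, rfl⟩ : ∃ n, m = n + 3 := ⟨m - 3, by omega⟩
    obtain ⟨b, c, hbc⟩ := hu.exists_X_mul_eq hP (n + 2)
    have hD := congrArg (Dw ω) hbc
    simp only [Dw_mul, Dw_add, Dw_X hω, Dw_C, X_comp, C_comp, zero_mul, add_zero] at hD
    have hP3 : P (n + 3) = Dw ω (P (n + 4)) + C b * Dw ω (P (n + 3)) + C c * Dw ω (P (n + 2))
        - X * Dw ω (P (n + 3)) - C ω * Dw ω (P (n + 3)) := by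
      linear_combination hD
    rw [hP3, map_sub, map_sub, map_add, map_add, C_mul', C_mul', C_mul', map_smul, map_smul,
      map_smul, hvXDP, hvDP (n + 2), hvDP (n + 1), hvDP n]
    simp
  obtain ⟨φ, hφ, hvφ⟩ := hu.exists_eq_comp_mulLeft hP v hvP
  obtain ⟨ψ, hψ, hvψ⟩ := hu.exists_eq_comp_mulLeft hP (d := 1) (v ∘ₗ DwLinearMap ω)
    fun m hm => by
      obtain ⟨n, rfl⟩ : ∃ n, m = n + 2 := ⟨m - 2, by omega⟩
      exact hvDP n
  refine ⟨φ, ψ, ⟨hφ, hψ, fun f => ?_⟩, hvφ⟩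
  calc u (φ * Dw ω f) = v (Dw ω f) := (LinearMap.congr_fun hvφ _).symm
    _ = u (ψ * f) := LinearMap.congr_fun hvψ f

theorem higher_derivatives_are_Dw_classical
    (ω : ℂ) (hω : ω ≠ 0) (P : ℕ → Polynomial ℂ) (hP : MonicPS P)
    (u0 : Polynomial ℂ →ₗ[ℂ] ℂ) (hops : IsOPSwrt P u0)
    (Pk : ℕ → ℕ → Polynomial ℂ) (hPk0 : ∀ n, Pk 0 n = P n)
    (hrec : ∀ k n : ℕ, Pk (k + 1) n = ((n : ℂ) + 1)⁻¹ • Dw ω (Pk k (n + 1)))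
    (h1 : ∃ v, IsOPSwrt (Pk 1) v) :
    ∀ k : ℕ, 1 ≤ k →
      (∃ v, IsOPSwrt (Pk k) v) ∧ (∃ w, IsOPSwrt (Pk (k + 1)) w) := by
  have hPk_zero : Pk 0 = P := funext hPk0
  have hPk_succ (k : ℕ) : Pk (k + 1) = derivSeq ω (Pk k) := funext (hrec k)
  have hmonic (k : ℕ) : MonicPS (Pk k) := by
    induction k with
    | zero => rwa [hPk_zero]
    | succ k ih => rw [hPk_succ]; exact monicPS_derivSeq hω ih
  have hclassical (k : ℕ) :
      ∃ u φ ψ, IsOPSwrt (Pk k) u ∧ IsPearsonPair ω u φ ψ ∧ IsAdmissiblePair φ ψ := by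
    induction k with
    | zero =>
      obtain ⟨v, hv⟩ := h1
      rw [hPk_succ] at hv
      have hu0 : IsOPSwrt (Pk 0) u0 := hPk_zero ▸ hops
      obtain ⟨φ, ψ, hpear, rfl⟩ := hu0.exists_isPearsonPair hω (hmonic 0) hv
      exact ⟨u0, φ, ψ, hu0, hpear, (hpear.isOPSwrt_derivSeq_iff (hmonic 0) hu0 hω).1 hv⟩
    | succ k ih =>
      obtain ⟨u, φ, ψ, hu, hpear, hadm⟩ := ih
      exact ⟨_, _, _, hPk_succ k ▸ (hpear.isOPSwrt_derivSeq_iff (hmonic k) hu hω).2 hadm,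
        hpear.comp_mulLeft, hadm.comp_sub_Dw hω hpear.natDegree_fst_le⟩
  intro k _
  obtain ⟨u, -, -, hu, -⟩ := hclassical k
  obtain ⟨w, -, -, hw, -⟩ := hclassical (k + 1)
  exact ⟨⟨u, hu⟩, ⟨w, hw⟩⟩
end
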